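/- Let d ≥ 1 be an integer, let 0 < γ < 1, let δ = 1/γ, and let ρ be a soft profile with decay exponent δ. Then there exist constants 0 < c' ≤ C' < ∞ (depending only on d, γ and the constants in the definition of ρ) such that for every u ∈ (0,1], every r ≥ 1 and every x ∈ ℝ^d with |x| = R ≥ 2r, one has c'·r^d·min(u^{−1} R^{−dδ}(1 + log₊(u R^{dδ})), 1) ≤ ∫_{B(0,r)} ∫_0^1 ρ(|x−y|^d (u v)^γ) dv dy ≤ C'·r^d·min(u^{−1} R^{−dδ}(1 + log₊(u R^{dδ})), 1). -/

import Mathlib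

/-!
Write `b(t) = (u t^{dδ})⁻¹`. Because `γδ = 1`, `(t^d (uv)^γ)^{-δ} = b(t) / v`, so the bounds
`ρ(x) ≍ min(x^{-δ}, 1)` make the inner integral at distance `t` comparable to
`∫₀¹ min(b(t)/v, 1) dv = min(b(t)(1 + log₊ b(t)⁻¹), 1)`; the logarithm is the trace of the
borderline exponent `γδ = 1`. For `y ∈ B(0,r)` and `|x| = R ≥ 2r` the distance `|x - y|` lies in
`[R/2, 2R]`. The inner integral is antitone in the distance, and changing `t` by a factor `2`
changes `b(t)` by the factor `2^{dδ}`, which the map `b ↦ min(b(1 + log₊ b⁻¹), 1)` turns into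
at most the same factor. Integrating over the ball contributes its volume `r^d |B(0,1)|`.
-/

open MeasureTheory Real Set

lemma setIntegral_mem_Icc_of_forall_mem_Icc {α : Type*} [MeasurableSpace α] {μ : Measure α}
    {s : Set α} {f : α → ℝ} {L U : ℝ} (hs : MeasurableSet s) (hμs : μ s ≠ ⊤)
    (hf : AEStronglyMeasurable f (μ.restrict s)) (hfs : ∀ y ∈ s, f y ∈ Icc L U) :
    ∫ y in s, f y ∂μ ∈ Icc (L * μ.real s) (U * μ.real s) := by
  have hint : IntegrableOn f s μ := by
    refine ⟨hf, .restrict_of_bounded (C := max |L| |U|) hμs.lt_top ?_⟩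
    filter_upwards [ae_restrict_mem hs] with y hy
    exact abs_le_max_abs_abs (hfs y hy).1 (hfs y hy).2
  refine ⟨setIntegral_ge_of_const_le_real hs hμs (fun y hy => (hfs y hy).1) hint, ?_⟩
  calc ∫ y in s, f y ∂μ ≤ ∫ _ in s, U ∂μ :=
        setIntegral_mono_on hint (integrableOn_const hμs) hs fun y hy => (hfs y hy).2
    _ = U * μ.real s := by rw [setIntegral_const, smul_eq_mul, mul_comm]

lemma Measure.addHaar_real_ball_of_pos {E : Type*} [NormedAddCommGroup E] [NormedSpace ℝ E]
    [MeasurableSpace E] [BorelSpace E] [FiniteDimensional ℝ E] (μ : Measure E)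
    [μ.IsAddHaarMeasure] (x : E) {r : ℝ} (hr : 0 < r) :
    μ.real (Metric.ball x r) = r ^ Module.finrank ℝ E * μ.real (Metric.ball 0 1) := by
  simp [measureReal_def, μ.addHaar_ball_of_pos x hr, hr.le]

lemma AntitoneOn.measurable_comp_of_nonneg {α : Type*} [MeasurableSpace α] {f : ℝ → ℝ}
    (hf : AntitoneOn f (Ici 0)) {g : α → ℝ} (hg : Measurable g) (hg0 : ∀ y, 0 ≤ g y) :
    Measurable fun y => f (g y) := by
  have hext : Antitone fun t => f (max t 0) := fun t t' htt' =>
    hf (le_max_right t 0) (le_max_right t' 0) (max_le_max htt' le_rfl)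
  convert hext.measurable.comp hg using 1
  ext y
  simp [max_eq_left (hg0 y)]

noncomputable def logCap (b : ℝ) : ℝ := min (b * (1 + max (log b⁻¹) 0)) 1

lemma mul_one_sub_log_le_one {b : ℝ} (hb : 0 < b) : b * (1 - log b) ≤ 1 := by
  have h := log_le_sub_one_of_pos (inv_pos.2 hb)
  rw [log_inv] at h
  have : b * b⁻¹ = 1 := mul_inv_cancel₀ hb.ne'
  nlinarith

lemma logCap_of_one_le {b : ℝ} (hb : 1 ≤ b) : logCap b = 1 := by
  have : log b⁻¹ ≤ 0 := log_nonpos (by positivity) (inv_le_one_of_one_le₀ hb)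
  rw [logCap, max_eq_right this, add_zero, mul_one, min_eq_right hb]

lemma logCap_of_le_one {b : ℝ} (hb : 0 < b) (hb1 : b ≤ 1) : logCap b = b * (1 - log b) := by
  have : 0 ≤ log b⁻¹ := log_nonneg (one_le_inv_iff₀.2 ⟨hb, hb1⟩)
  rw [logCap, max_eq_left this, log_inv, ← sub_eq_add_neg,
    min_eq_left (mul_one_sub_log_le_one hb)]

lemma logCap_mul_le {κ b : ℝ} (hκ : 1 ≤ κ) (hb : 0 < b) : logCap (κ * b) ≤ κ * logCap b := by
  rcases le_or_gt b 1 with hb1 | hb1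
  · have hlogb : log b ≤ 0 := log_nonpos hb.le hb1
    rcases le_or_gt (κ * b) 1 with hκb | hκb
    · have hlogκ : 0 ≤ log κ := log_nonneg hκ
      rw [logCap_of_le_one (by positivity) hκb, logCap_of_le_one hb hb1,
        log_mul (by positivity) hb.ne']
      nlinarith [mul_nonneg (mul_nonneg (zero_le_one.trans hκ) hb.le) hlogκ]
    · rw [logCap_of_one_le hκb.le, logCap_of_le_one hb hb1]
      nlinarith
  · rw [logCap_of_one_le (by nlinarith), logCap_of_one_le hb1.le, mul_one]
    exact hκ

lemma logCap_le_mul_inv {κ b : ℝ} (hκ : 1 ≤ κ) (hb : 0 < b) :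
    logCap b ≤ κ * logCap (κ⁻¹ * b) := by
  have hκ0 : κ ≠ 0 := (one_pos.trans_le hκ).ne'
  simpa [mul_inv_cancel_left₀ hκ0] using logCap_mul_le hκ (b := κ⁻¹ * b) (by positivity)

lemma integrableOn_min_div_one {b : ℝ} (hb : 0 ≤ b) :
    IntegrableOn (fun v : ℝ => min (b / v) 1) (Ioc 0 1) := by
  refine Measure.integrableOn_of_bounded (M := 1) (by simp) (by fun_prop) ?_
  filter_upwards [ae_restrict_mem measurableSet_Ioc] with v hv
  rw [norm_of_nonneg (le_min (div_nonneg hb hv.1.le) zero_le_one)]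
  exact min_le_right _ _

lemma integral_min_div_one {b : ℝ} (hb : 0 < b) :
    ∫ v in Ioc (0 : ℝ) 1, min (b / v) 1 = logCap b := by
  have hint := integrableOn_min_div_one hb.le
  have h_one : ∀ a, a ≤ b → ∫ v in Ioc (0 : ℝ) a, min (b / v) 1 = max a 0 := fun a ha => by
    rw [setIntegral_congr_fun measurableSet_Ioc (g := fun _ => (1 : ℝ))
      fun v hv => min_eq_right ((le_div_iff₀ hv.1).2 (by nlinarith [hv.2]))]
    simp
  rcases le_or_gt 1 b with hb1 | hb1
  · rw [h_one 1 hb1, logCap_of_one_le hb1]; simp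
  have h_log : ∫ v in Ioc b 1, min (b / v) 1 = b * -log b := by
    rw [setIntegral_congr_fun measurableSet_Ioc (g := fun v => b * v⁻¹)
        fun v hv => by rw [min_eq_left ((div_le_one (hb.trans hv.1)).2 hv.1.le), div_eq_mul_inv],
      integral_const_mul, ← intervalIntegral.integral_of_le hb1.le, integral_inv_of_pos hb one_pos,
      log_div one_ne_zero hb.ne', log_one, zero_sub]
  rw [← Ioc_union_Ioc_eq_Ioc hb.le hb1.le, setIntegral_union (Ioc_disjoint_Ioc_of_le le_rfl)
      measurableSet_Ioc (hint.mono_set (Ioc_subset_Ioc_right hb1.le))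
      (hint.mono_set (Ioc_subset_Ioc_left hb.le)), h_one b le_rfl, h_log, max_eq_left hb.le,
    logCap_of_le_one hb hb1.le]
  ring

lemma rpow_mul_mul_rpow_neg {γ δ s u v : ℝ} (hγδ : γ * δ = 1) (hs : 0 ≤ s) (hu : 0 < u)
    (hv : 0 < v) : (s * (u * v) ^ γ) ^ (-δ) = (u * s ^ δ)⁻¹ / v := by
  have huv : 0 < u * v := mul_pos hu hv
  rw [mul_rpow hs (rpow_nonneg huv.le _), ← rpow_mul huv.le, mul_neg, hγδ, rpow_neg_one,
    rpow_neg hs, mul_inv]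
  field_simp

noncomputable def connectionProb (ρ : ℝ → ℝ) (d : ℕ) (γ u t : ℝ) : ℝ :=
  ∫ v in Ioc (0 : ℝ) 1, ρ (t ^ d * (u * v) ^ γ)

structure IsSoftProfile (ρ : ℝ → ℝ) (δ c C : ℝ) : Prop where
  mem_unitInterval : ∀ x : ℝ, 0 ≤ x → 0 ≤ ρ x ∧ ρ x ≤ 1
  antitoneOn : AntitoneOn ρ (Ici 0)
  rpow_bounds : ∀ x : ℝ, 1 ≤ x → c * x ^ (-δ) ≤ ρ x ∧ ρ x ≤ C * x ^ (-δ)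

namespace IsSoftProfile

variable {ρ : ℝ → ℝ} {δ c C γ u : ℝ}

lemma const_le_one (hρ : IsSoftProfile ρ δ c C) : c ≤ 1 := by
  simpa using (hρ.rpow_bounds 1 le_rfl).1.trans (hρ.mem_unitInterval 1 zero_le_one).2

lemma bounds_min_rpow (hρ : IsSoftProfile ρ δ c C) (hδ : 0 ≤ δ) {x : ℝ} (hx : 0 < x) :
    c * min (x ^ (-δ)) 1 ≤ ρ x ∧ ρ x ≤ max 1 C * min (x ^ (-δ)) 1 := by
  rcases le_or_gt 1 x with hx1 | hx1
  · rw [min_eq_left (rpow_le_one_of_one_le_of_nonpos hx1 (neg_nonpos.2 hδ))]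
    exact ⟨(hρ.rpow_bounds x hx1).1, (hρ.rpow_bounds x hx1).2.trans
      (mul_le_mul_of_nonneg_right (le_max_right _ _) (rpow_nonneg hx.le _))⟩
  · rw [min_eq_right (one_le_rpow_of_pos_of_le_one_of_nonpos hx hx1.le (neg_nonpos.2 hδ)),
      mul_one, mul_one]
    have hc : c ≤ ρ 1 := by simpa using (hρ.rpow_bounds 1 le_rfl).1
    exact ⟨hc.trans (hρ.antitoneOn (mem_Ici.2 hx.le) (mem_Ici.2 zero_le_one) hx1.le),
      (hρ.mem_unitInterval x hx.le).2.trans (le_max_left _ _)⟩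

lemma antitoneOn_comp (hρ : IsSoftProfile ρ δ c C) {s : Set ℝ} {g : ℝ → ℝ}
    (hg : MonotoneOn g s) (hg0 : ∀ v ∈ s, 0 ≤ g v) : AntitoneOn (fun v => ρ (g v)) s :=
  fun _ hv _ hw hvw => hρ.antitoneOn (hg0 _ hv) (hg0 _ hw) (hg hv hw hvw)

lemma integrableOn_comp_mul_rpow (hρ : IsSoftProfile ρ δ c C) (hγ : 0 ≤ γ) {s : ℝ}
    (hs : 0 ≤ s) (hu : 0 ≤ u) : IntegrableOn (fun v => ρ (s * (u * v) ^ γ)) (Ioc 0 1) := by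
  have hmono : MonotoneOn (fun v : ℝ => s * (u * v) ^ γ) (Icc 0 1) := fun v hv w _ hvw =>
    mul_le_mul_of_nonneg_left
      (rpow_le_rpow (mul_nonneg hu hv.1) (mul_le_mul_of_nonneg_left hvw hu) hγ) hs
  exact ((hρ.antitoneOn_comp hmono fun v hv => by have := hv.1; positivity).integrableOn_isCompact
    isCompact_Icc).mono_set Ioc_subset_Icc_self

lemma antitoneOn_connectionProb (hρ : IsSoftProfile ρ δ c C) (hγ : 0 ≤ γ) (hu : 0 ≤ u)
    (d : ℕ) : AntitoneOn (connectionProb ρ d γ u) (Ici 0) := by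
  intro t (ht : 0 ≤ t) t' (ht' : 0 ≤ t') htt'
  refine setIntegral_mono_on (hρ.integrableOn_comp_mul_rpow hγ (by positivity) hu)
    (hρ.integrableOn_comp_mul_rpow hγ (by positivity) hu) measurableSet_Ioc fun v hv => ?_
  have := hv.1
  exact hρ.antitoneOn (mem_Ici.2 (by positivity)) (mem_Ici.2 (by positivity)) <|
    mul_le_mul_of_nonneg_right (pow_le_pow_left₀ ht htt' d) (by positivity)

lemma connectionProb_bounds (hρ : IsSoftProfile ρ δ c C) (hγ : 0 < γ) (hγδ : γ * δ = 1)
    (hu : 0 < u) (d : ℕ) {t : ℝ} (ht : 0 < t) :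
    c * logCap (u * t ^ ((d : ℝ) * δ))⁻¹ ≤ connectionProb ρ d γ u t ∧
      connectionProb ρ d γ u t ≤ max 1 C * logCap (u * t ^ ((d : ℝ) * δ))⁻¹ := by
  have hδ : 0 ≤ δ := (pos_of_mul_pos_right (hγδ ▸ one_pos) hγ.le).le
  set b := (u * t ^ ((d : ℝ) * δ))⁻¹
  have hb : 0 < b := by positivity
  have hpoint : ∀ v ∈ Ioc (0 : ℝ) 1,
      c * min (b / v) 1 ≤ ρ (t ^ d * (u * v) ^ γ) ∧
        ρ (t ^ d * (u * v) ^ γ) ≤ max 1 C * min (b / v) 1 := fun v hv => by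
    have hv0 := hv.1
    have := hρ.bounds_min_rpow hδ (x := t ^ d * (u * v) ^ γ) (by positivity)
    rwa [rpow_mul_mul_rpow_neg hγδ (by positivity) hu hv0, ← rpow_natCast_mul ht.le] at this
  have hint := hρ.integrableOn_comp_mul_rpow hγ.le (s := t ^ d) (by positivity) hu.le
  have hmin := integrableOn_min_div_one hb.le
  rw [← integral_min_div_one hb, ← integral_const_mul, ← integral_const_mul]
  exact ⟨setIntegral_mono_on (hmin.const_mul c) hint measurableSet_Ioc fun v hv =>
      (hpoint v hv).1,
    setIntegral_mono_on hint (hmin.const_mul _) measurableSet_Ioc fun v hv => (hpoint v hv).2⟩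

lemma connectionProb_bounds_of_mem_Icc (hρ : IsSoftProfile ρ δ c C) (hc : 0 ≤ c) (hγ : 0 < γ)
    (hγδ : γ * δ = 1) (hu : 0 < u) (d : ℕ) {a R t : ℝ} (ha : 1 ≤ a) (hR : 0 < R) (ht : t ∈ Icc (R / a) (a * R)) :
    c * logCap (u * R ^ ((d : ℝ) * δ))⁻¹ / a ^ ((d : ℝ) * δ) ≤ connectionProb ρ d γ u t ∧
      connectionProb ρ d γ u t ≤
        max 1 C * a ^ ((d : ℝ) * δ) * logCap (u * R ^ ((d : ℝ) * δ))⁻¹ := by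
  have hδ : 0 ≤ δ := (pos_of_mul_pos_right (hγδ ▸ one_pos) hγ.le).le
  have ha0 : 0 < a := one_pos.trans_le ha
  set e := (d : ℝ) * δ
  set κ := a ^ e
  set b := (u * R ^ e)⁻¹
  have hκ : 1 ≤ κ := one_le_rpow ha (by positivity)
  have hb : 0 < b := by positivity
  have hanti := hρ.antitoneOn_connectionProb hγ.le hu.le d
  have ht0 : 0 ≤ t := le_trans (by positivity) ht.1
  have h_far : (u * (a * R) ^ e)⁻¹ = κ⁻¹ * b := by
    rw [mul_rpow ha0.le hR.le, mul_left_comm, mul_inv]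
  have h_near : (u * (R / a) ^ e)⁻¹ = κ * b := by
    rw [div_rpow hR.le ha0.le, mul_div_assoc', div_eq_mul_inv, mul_inv, inv_inv, mul_comm]
  constructor
  · calc c * logCap b / κ ≤ c * logCap (κ⁻¹ * b) := by
          rw [div_le_iff₀ (one_pos.trans_le hκ), mul_assoc, mul_comm (logCap _)]
          exact mul_le_mul_of_nonneg_left (logCap_le_mul_inv hκ hb) hc
      _ = c * logCap (u * (a * R) ^ e)⁻¹ := by rw [h_far]
      _ ≤ connectionProb ρ d γ u (a * R) :=
          (hρ.connectionProb_bounds hγ hγδ hu d (by positivity)).1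
      _ ≤ connectionProb ρ d γ u t := hanti ht0 (mem_Ici.2 (by positivity)) ht.2
  · calc connectionProb ρ d γ u t ≤ connectionProb ρ d γ u (R / a) :=
          hanti (mem_Ici.2 (by positivity)) ht0 ht.1
      _ ≤ max 1 C * logCap (u * (R / a) ^ e)⁻¹ :=
          (hρ.connectionProb_bounds hγ hγδ hu d (by positivity)).2
      _ ≤ max 1 C * (κ * logCap b) := by
          rw [h_near]
          exact mul_le_mul_of_nonneg_left (logCap_mul_le hκ hb) (by positivity)
      _ = max 1 C * κ * logCap b := by ring

end IsSoftProfile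

theorem stmt_7_general (d : ℕ) (γ δ : ℝ) (hγ0 : 0 < γ)
    (hδ : δ = 1 / γ)
    (ρ : ℝ → ℝ) (c C : ℝ) (hc : 0 < c)
    (hρ_range : ∀ x : ℝ, 0 ≤ x → 0 ≤ ρ x ∧ ρ x ≤ 1)
    (hρ_mono : AntitoneOn ρ (Ici (0 : ℝ)))
    (hρ_bound : ∀ x : ℝ, 1 ≤ x → c * x ^ (-δ) ≤ ρ x ∧ ρ x ≤ C * x ^ (-δ)) :
    ∃ c' C' : ℝ, 0 < c' ∧ c' ≤ C' ∧
      ∀ u r R : ℝ, u ∈ Ioc (0 : ℝ) 1 → 1 ≤ r →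
        ∀ x : EuclideanSpace ℝ (Fin d), ‖x‖ = R → 2 * r ≤ R →
      c' * (r ^ d * min (u⁻¹ * R ^ (-((d : ℝ) * δ)) *
              (1 + max (Real.log (u * R ^ ((d : ℝ) * δ))) 0)) 1) ≤
          (∫ y in Metric.ball (0 : EuclideanSpace ℝ (Fin d)) r,
              ∫ v in Ioc (0 : ℝ) 1, ρ (‖x - y‖ ^ d * (u * v) ^ γ)) ∧
      (∫ y in Metric.ball (0 : EuclideanSpace ℝ (Fin d)) r,
              ∫ v in Ioc (0 : ℝ) 1, ρ (‖x - y‖ ^ d * (u * v) ^ γ)) ≤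
          C' * (r ^ d * min (u⁻¹ * R ^ (-((d : ℝ) * δ)) *
              (1 + max (Real.log (u * R ^ ((d : ℝ) * δ))) 0)) 1) := by
  have hρ : IsSoftProfile ρ δ c C := ⟨hρ_range, hρ_mono, hρ_bound⟩
  have hγδ : γ * δ = 1 := by rw [hδ, mul_one_div_cancel hγ0.ne']
  set κ := (2 : ℝ) ^ ((d : ℝ) * δ)
  have hκ : 1 ≤ κ := one_le_rpow one_le_two (by rw [hδ]; positivity)
  set ω := volume.real (Metric.ball (0 : EuclideanSpace ℝ (Fin d)) 1)
  have hω : 0 < ω := ENNReal.toReal_pos (Metric.measure_ball_pos volume _ one_pos).ne'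
    measure_ball_lt_top.ne
  refine ⟨c * ω / κ, max 1 C * κ * ω, by positivity, ?_, ?_⟩
  · calc c * ω / κ ≤ c * ω := div_le_self (by positivity) hκ
      _ ≤ 1 * ω := by gcongr; exact hρ.const_le_one
      _ ≤ max 1 C * κ * ω := by
          gcongr; exact one_le_mul_of_one_le_of_one_le (le_max_left _ _) hκ
  rintro u r _ ⟨hu, -⟩ hr x rfl hrx
  have hmin : min (u⁻¹ * ‖x‖ ^ (-((d : ℝ) * δ)) * (1 + max (log (u * ‖x‖ ^ ((d : ℝ) * δ))) 0)) 1
      = logCap (u * ‖x‖ ^ ((d : ℝ) * δ))⁻¹ := by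
    rw [logCap, inv_inv, mul_inv, rpow_neg (norm_nonneg x)]
  have hdist : ∀ y ∈ Metric.ball (0 : EuclideanSpace ℝ (Fin d)) r,
      ‖x - y‖ ∈ Icc (‖x‖ / 2) (2 * ‖x‖) := fun y hy => by
    rw [mem_ball_zero_iff] at hy
    constructor <;> linarith [norm_sub_norm_le x y, norm_sub_le x y]
  have hbounds := setIntegral_mem_Icc_of_forall_mem_Icc (μ := volume)
    (f := fun y => connectionProb ρ d γ u ‖x - y‖) measurableSet_ball measure_ball_lt_top.ne
    ((hρ.antitoneOn_connectionProb hγ0.le hu.le d).measurable_comp_of_nonneg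
      (measurable_const.sub measurable_id).norm fun y => norm_nonneg _).aestronglyMeasurable
    fun y hy => hρ.connectionProb_bounds_of_mem_Icc hc.le hγ0 hγδ hu d one_le_two
      (by linarith) (hdist y hy)
  rw [Measure.addHaar_real_ball_of_pos volume 0 (by linarith), finrank_euclideanSpace_fin]
    at hbounds
  rw [hmin]
  exact ⟨(by ring : _ = _).trans_le hbounds.1, hbounds.2.trans_eq (by ring)⟩

/-- One-edge connection probability from a fixed vertex `(x,u)` with `|x| = R ≥ 2r` to the
ball `B(0,r)`, soft profile, boundary regime `δ = 1/γ`: the expected number of direct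
connections is of order `r^d · min(u⁻¹ R^{-dδ}(1 + log₊(u R^{dδ})), 1)`. -/
theorem stmt_7 (d : ℕ) (hd : 1 ≤ d) (γ δ : ℝ) (hγ0 : 0 < γ) (hγ1 : γ < 1)
    (hδ : δ = 1 / γ)
    (ρ : ℝ → ℝ) (c C : ℝ) (hc : 0 < c) (hcC : c ≤ C)
    (hρ_range : ∀ x : ℝ, 0 ≤ x → 0 ≤ ρ x ∧ ρ x ≤ 1)
    (hρ_mono : AntitoneOn ρ (Ici (0 : ℝ)))
    (hρ_bound : ∀ x : ℝ, 1 ≤ x → c * x ^ (-δ) ≤ ρ x ∧ ρ x ≤ C * x ^ (-δ)) :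
    ∃ c' C' : ℝ, 0 < c' ∧ c' ≤ C' ∧
      ∀ u r R : ℝ, u ∈ Ioc (0 : ℝ) 1 → 1 ≤ r →
        ∀ x : EuclideanSpace ℝ (Fin d), ‖x‖ = R → 2 * r ≤ R →
      c' * (r ^ d * min (u⁻¹ * R ^ (-((d : ℝ) * δ)) *
              (1 + max (Real.log (u * R ^ ((d : ℝ) * δ))) 0)) 1) ≤
          (∫ y in Metric.ball (0 : EuclideanSpace ℝ (Fin d)) r,
              ∫ v in Ioc (0 : ℝ) 1, ρ (‖x - y‖ ^ d * (u * v) ^ γ)) ∧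
      (∫ y in Metric.ball (0 : EuclideanSpace ℝ (Fin d)) r,
              ∫ v in Ioc (0 : ℝ) 1, ρ (‖x - y‖ ^ d * (u * v) ^ γ)) ≤
          C' * (r ^ d * min (u⁻¹ * R ^ (-((d : ℝ) * δ)) *
              (1 + max (Real.log (u * R ^ ((d : ℝ) * δ))) 0)) 1) :=
  stmt_7_general d γ δ hγ0 hδ ρ c C hc hρ_range hρ_mono hρ_bound
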